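/- arXiv:2210.17512 — 2 statements merged into one kernel-verified Lean document; each statement's English description precedes it below -/
import Mathlib

section
/- (Twistor spinors on flat ℝ⁴ are affine linear.) A smooth function ψ : ℝ⁴ → Cl satisfies the twistor equation ∂ᵢψ(x) = −(1/4) eᵢ · (Σ_{j=1}^4 eⱼ ∂ⱼψ(x)) for all i ∈ {1,2,3,4} and all x ∈ ℝ⁴ if and only if there exist constants ψ₁, ψ₂ ∈ Cl such that ψ(x) = (Σ_{i=1}^4 xᵢeᵢ)·ψ₁ + ψ₂ for all x ∈ ℝ⁴. -/
/-- The quadratic form `Q(v) = -(v₁² + v₂² + v₃² + v₄²)` on `ℂ⁴`. -/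
noncomputable def Q : QuadraticForm ℂ (Fin 4 → ℂ) :=
  QuadraticMap.weightedSumSquares ℂ (fun _ : Fin 4 => (-1 : ℂ))

/-- The complex Clifford algebra of `Q`. -/
abbrev Cl : Type _ := CliffordAlgebra Q

/-- The standard generators `eᵢ`, satisfying `eᵢ² = -1`, `eᵢeⱼ = -eⱼeᵢ` for `i ≠ j`. -/
noncomputable def e (i : Fin 4) : Cl := CliffordAlgebra.ι Q (Pi.single i 1)

/-! Since `Cl` carries no norm, smoothness and partial derivatives of `Cl`-valued
functions are expressed by testing against all `ℂ`-linear functionals — an equivalent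
description, since `Cl` is a finite-dimensional vector space and linear functionals
separate points. -/

/-- `ψ : ℝ⁴ → Cl` is smooth. -/
def SmoothCl (ψ : (Fin 4 → ℝ) → Cl) : Prop :=
  ∀ lam : Cl →ₗ[ℂ] ℂ, ContDiff ℝ (⊤ : ℕ∞) fun y => lam (ψ y)

/-- `g` is the partial derivative of `f : ℝ⁴ → Cl` in the `i`-th coordinate direction. -/
def HasPDeriv (f : (Fin 4 → ℝ) → Cl) (i : Fin 4) (g : (Fin 4 → ℝ) → Cl) : Prop :=
  ∀ (lam : Cl →ₗ[ℂ] ℂ) (x : Fin 4 → ℝ),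
    HasLineDerivAt ℝ (fun y => lam (f y)) (lam (g x)) x (Pi.single i 1)

lemma Q_single (i : Fin 4) : Q (Pi.single i 1) = -1 := by
  simp [Q, QuadraticMap.weightedSumSquares_apply, Pi.single_apply]

lemma e_sq (i : Fin 4) : e i * e i = -1 := by
  rw [e, CliffordAlgebra.ι_sq_scalar, Q_single, map_neg, map_one]

lemma e_anti {i j : Fin 4} (h : i ≠ j) : e i * e j = -(e j * e i) := by
  have h2 := CliffordAlgebra.ι_mul_ι_add_swap (Q := Q) (Pi.single i 1) (Pi.single j 1)
  have hp : QuadraticMap.polar (⇑Q) (Pi.single i 1) (Pi.single j 1) = 0 := by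
    rw [QuadraticMap.polar]
    simp only [Q, QuadraticMap.weightedSumSquares_apply, smul_eq_mul, neg_mul, one_mul,
      Pi.add_apply]
    rw [← Finset.sum_sub_distrib, ← Finset.sum_sub_distrib, Finset.sum_eq_zero]
    intro k _
    rcases eq_or_ne k i with rfl | hi <;> rcases eq_or_ne k j with rfl | hj <;>
      simp_all [Pi.single_apply]
  rw [hp, map_zero] at h2
  rw [e, e]
  linear_combination (norm := noncomm_ring) h2

/-- Monomial in the generators. -/
noncomputable def mon (l : List (Fin 4)) : Cl := (l.map e).prod

@[simp] lemma mon_nil : mon [] = 1 := rfl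
@[simp] lemma mon_cons (a : Fin 4) (l : List (Fin 4)) : mon (a :: l) = e a * mon l := by
  simp [mon]

/-- A finite spanning submodule. -/
noncomputable def Mspan : Submodule ℂ Cl :=
  Submodule.span ℂ (Set.range fun s : Finset (Fin 4) => mon (s.sort (· ≤ ·)))

lemma mon_mem {l : List (Fin 4)} (hl : l.Pairwise (· < ·)) : mon l ∈ Mspan := by
  have h : l.toFinset.sort (· ≤ ·) = l :=
    (List.toFinset_sort _ hl.nodup).mpr (hl.imp fun h => le_of_lt h)
  exact Submodule.subset_span ⟨l.toFinset, by dsimp only; rw [h]⟩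

lemma e_mul_mon (i : Fin 4) :
    ∀ l : List (Fin 4), l.Pairwise (· < ·) →
      ∃ m : List (Fin 4), m.Pairwise (· < ·) ∧ (∀ b ∈ m, b = i ∨ b ∈ l) ∧
        (e i * mon l = mon m ∨ e i * mon l = -mon m) := by
  intro l
  induction l with
  | nil =>
    intro _
    exact ⟨[i], List.pairwise_singleton _ i, by simp, Or.inl (by simp)⟩
  | cons a t ih =>
    intro hs
    have hts : t.Pairwise (· < ·) := hs.of_cons
    have hat : ∀ b ∈ t, a < b := fun b hb => List.rel_of_pairwise_cons hs hb
    rcases lt_trichotomy i a with hia | rfl | hai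
    · refine ⟨i :: a :: t, ?_, ?_, Or.inl (by simp)⟩
      · exact List.pairwise_cons.mpr ⟨fun b hb => by
          rcases List.mem_cons.mp hb with rfl | hb
          · exact hia
          · exact hia.trans (hat b hb), hs⟩
      · intro b hb
        rcases List.mem_cons.mp hb with rfl | hb
        · exact Or.inl rfl
        · exact Or.inr hb
    · refine ⟨t, hts, fun b hb => Or.inr (List.mem_cons_of_mem _ hb), Or.inr ?_⟩
      rw [mon_cons, ← mul_assoc, e_sq]
      simp
    · obtain ⟨m, hm, hmem, heq⟩ := ih hts
      have ham : ∀ b ∈ m, a < b := by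
        intro b hb
        rcases hmem b hb with rfl | hb
        · exact hai
        · exact hat b hb
      refine ⟨a :: m, List.pairwise_cons.mpr ⟨ham, hm⟩, ?_, ?_⟩
      · intro b hb
        rcases List.mem_cons.mp hb with rfl | hb
        · exact Or.inr (List.mem_cons_self)
        · rcases hmem b hb with rfl | h
          · exact Or.inl rfl
          · exact Or.inr (List.mem_cons_of_mem _ h)
      · have hne : i ≠ a := (ne_of_gt hai)
        have : e i * mon (a :: t) = -(e a * (e i * mon t)) := by
          rw [mon_cons, ← mul_assoc, e_anti hne]
          noncomm_ring
        rcases heq with h1 | h1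
        · rw [this, h1, mon_cons]; exact Or.inr rfl
        · rw [this, h1, mon_cons]
          exact Or.inl (by noncomm_ring)

lemma e_mul_mem (i : Fin 4) {x : Cl} (hx : x ∈ Mspan) : e i * x ∈ Mspan := by
  induction hx using Submodule.span_induction with
  | mem y hy =>
    obtain ⟨s, rfl⟩ := hy
    obtain ⟨m, hm, -, heq⟩ := e_mul_mon i (s.sort (· ≤ ·)) (Finset.sortedLT_sort s).pairwise
    rcases heq with h | h
    · rw [h]; exact mon_mem hm
    · rw [h]; exact neg_mem (mon_mem hm)
  | zero => simp
  | add y z _ _ hy hz => rw [mul_add]; exact add_mem hy hz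
  | smul c y _ hy => rw [mul_smul_comm]; exact Submodule.smul_mem _ _ hy

lemma mon_mul_mem (l : List (Fin 4)) {y : Cl} (hy : y ∈ Mspan) : mon l * y ∈ Mspan := by
  induction l with
  | nil => simpa using hy
  | cons a t ih => rw [mon_cons, mul_assoc]; exact e_mul_mem a ih

lemma mul_mem_Mspan {x y : Cl} (hx : x ∈ Mspan) (hy : y ∈ Mspan) : x * y ∈ Mspan := by
  induction hx using Submodule.span_induction with
  | mem z hz => obtain ⟨s, rfl⟩ := hz; exact mon_mul_mem _ hy
  | zero => simp
  | add u v _ _ hu hv => rw [add_mul]; exact add_mem hu hv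
  | smul c u _ hu => rw [smul_mul_assoc]; exact Submodule.smul_mem _ _ hu

lemma ι_eq_sum (v : Fin 4 → ℂ) : CliffordAlgebra.ι Q v = ∑ i : Fin 4, v i • e i := by
  have hv : v = ∑ i : Fin 4, v i • (Pi.single i 1 : Fin 4 → ℂ) := by
    ext k
    simp [Pi.single_apply]
  conv_lhs => rw [hv]
  simp [e]

lemma Mspan_eq_top : Mspan = ⊤ := by
  rw [eq_top_iff]
  intro x hx
  clear hx
  induction x using CliffordAlgebra.induction with
  | algebraMap r =>
    have h1 : (algebraMap ℂ Cl) r = r • mon [] := by simp [Algebra.algebraMap_eq_smul_one]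
    rw [h1]
    exact Submodule.smul_mem _ _ (mon_mem (by simp))
  | ι v =>
    rw [ι_eq_sum]
    refine Submodule.sum_mem _ fun i _ => Submodule.smul_mem _ _ ?_
    have : e i = mon [i] := by simp
    rw [this]
    exact mon_mem (List.pairwise_singleton _ i)
  | mul u v hu hv => exact mul_mem_Mspan hu hv
  | add u v hu hv => exact add_mem hu hv

instance : Module.Finite ℂ Cl := by
  rw [Module.finite_def, ← Mspan_eq_top]
  exact Submodule.fg_span (Set.finite_range _)





noncomputable def bb : Module.Basis (Fin (Module.finrank ℂ Cl)) ℂ Cl := Module.finBasis ℂ Cl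

/-- Functionals separate points. -/
lemma eq_of_lam (a b : Cl) (h : ∀ lam : Cl →ₗ[ℂ] ℂ, lam a = lam b) : a = b :=
  bb.ext_elem fun j => h (bb.coord j)

/-- Coordinate functions of `f`. -/
noncomputable def cf (f : (Fin 4 → ℝ) → Cl) (j : Fin (Module.finrank ℂ Cl)) :
    (Fin 4 → ℝ) → ℂ := fun y => bb.coord j (f y)

/-- Candidate partial derivative of `f` in direction `i`, built from coordinates. -/
noncomputable def DCl (f : (Fin 4 → ℝ) → Cl) (i : Fin 4) (x : Fin 4 → ℝ) : Cl :=
  ∑ j, (fderiv ℝ (cf f j) x (Pi.single i 1)) • bb j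

lemma lam_eq_sum (lam : Cl →ₗ[ℂ] ℂ) (f : (Fin 4 → ℝ) → Cl) (y : Fin 4 → ℝ) :
    lam (f y) = ∑ j, cf f j y * lam (bb j) := by
  conv_lhs => rw [← Module.Basis.sum_repr bb (f y)]
  rw [map_sum]
  exact Finset.sum_congr rfl fun j _ => by
    rw [map_smul, smul_eq_mul]; rfl

lemma smoothcl_cf {f : (Fin 4 → ℝ) → Cl} (hf : SmoothCl f) (j : Fin (Module.finrank ℂ Cl)) :
    ContDiff ℝ (⊤ : ℕ∞) (cf f j) := hf (bb.coord j)

lemma hasPDeriv_DCl {f : (Fin 4 → ℝ) → Cl} (hf : SmoothCl f) (i : Fin 4) :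
    HasPDeriv f i (DCl f i) := by
  intro lam x
  have hld : ∀ j, HasLineDerivAt ℝ (cf f j) (fderiv ℝ (cf f j) x (Pi.single i 1)) x
      (Pi.single i 1) := fun j =>
    (((smoothcl_cf hf j).differentiable (by simp)).differentiableAt.hasFDerivAt).hasLineDerivAt _
  have key : HasLineDerivAt ℝ (fun y => ∑ j, cf f j y * lam (bb j))
      (∑ j, fderiv ℝ (cf f j) x (Pi.single i 1) * lam (bb j)) x (Pi.single i 1) :=
    HasDerivAt.fun_sum fun j _ => HasDerivAt.mul_const (hld j) _
  have h1 : (fun y => lam (f y)) = fun y => ∑ j, cf f j y * lam (bb j) :=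
    funext fun y => lam_eq_sum lam f y
  have h2 : lam (DCl f i x) = ∑ j, fderiv ℝ (cf f j) x (Pi.single i 1) * lam (bb j) := by
    rw [DCl, map_sum]
    exact Finset.sum_congr rfl fun j _ => by rw [map_smul, smul_eq_mul]
  rw [h1, h2]
  exact key

lemma hasPDeriv_unique {f g g' : (Fin 4 → ℝ) → Cl} {i : Fin 4} (h : HasPDeriv f i g)
    (h' : HasPDeriv f i g') : g = g' :=
  funext fun x => eq_of_lam _ _ fun lam => (h lam x).unique (h' lam x)

lemma smoothCl_DCl {f : (Fin 4 → ℝ) → Cl} (hf : SmoothCl f) (i : Fin 4) :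
    SmoothCl (DCl f i) := by
  intro lam
  have h2 : (fun x => lam (DCl f i x))
      = fun x => ∑ j, fderiv ℝ (cf f j) x (Pi.single i 1) * lam (bb j) := by
    funext x
    rw [DCl, map_sum]
    exact Finset.sum_congr rfl fun j _ => by rw [map_smul, smul_eq_mul]
  rw [h2]
  refine ContDiff.sum fun j _ => ContDiff.mul ?_ contDiff_const
  exact ContDiff.clm_apply ((smoothcl_cf hf j).fderiv_right (by simp)) contDiff_const

/-- `HasPDeriv` composed with a linear map. -/
lemma hasPDeriv_compL {f g : (Fin 4 → ℝ) → Cl} {i : Fin 4} (L : Cl →ₗ[ℂ] Cl)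
    (h : HasPDeriv f i g) : HasPDeriv (fun x => L (f x)) i (fun x => L (g x)) :=
  fun lam x => h (lam.comp L) x

lemma smoothCl_compL {f : (Fin 4 → ℝ) → Cl} (L : Cl →ₗ[ℂ] Cl) (hf : SmoothCl f) :
    SmoothCl (fun x => L (f x)) := fun lam => hf (lam.comp L)

lemma hasPDeriv_add {f f' g g' : (Fin 4 → ℝ) → Cl} {i : Fin 4} (h : HasPDeriv f i g)
    (h' : HasPDeriv f' i g') : HasPDeriv (fun x => f x + f' x) i (fun x => g x + g' x) := by
  intro lam x
  have := (h lam x).add (h' lam x)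
  simp only [map_add]
  exact this

lemma smoothCl_sum {f : Fin 4 → (Fin 4 → ℝ) → Cl} (h : ∀ k, SmoothCl (f k)) :
    SmoothCl (fun x => ∑ k, f k x) := by
  intro lam
  have : (fun y => lam (∑ k, f k y)) = fun y => ∑ k, lam (f k y) := by
    funext y; rw [map_sum]
  rw [this]
  exact ContDiff.sum fun k _ => h k lam

/-- A function with vanishing partial derivatives is constant. -/
lemma const_of_pderiv_zero {f : (Fin 4 → ℝ) → Cl} (hf : SmoothCl f)
    (h : ∀ i, HasPDeriv f i (fun _ => 0)) (x : Fin 4 → ℝ) : f x = f 0 := by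
  refine eq_of_lam _ _ fun lam => ?_
  have hdiff : Differentiable ℝ (fun y => lam (f y)) := (hf lam).differentiable (by simp)
  refine is_const_of_fderiv_eq_zero hdiff (fun y => ?_) x 0
  ext v
  have hv : v = ∑ i : Fin 4, v i • (Pi.single i 1 : Fin 4 → ℝ) := by
    ext k; simp [Pi.single_apply]
  rw [ContinuousLinearMap.zero_apply]
  conv_lhs => rw [hv]
  rw [map_sum]
  refine Finset.sum_eq_zero fun i _ => ?_
  rw [map_smul]
  have h1 : HasLineDerivAt ℝ (fun y => lam (f y)) (fderiv ℝ (fun y => lam (f y)) y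
      (Pi.single i 1)) y (Pi.single i 1) :=
    (hdiff.differentiableAt.hasFDerivAt).hasLineDerivAt _
  have h2 := h i lam y
  rw [map_zero] at h2
  rw [h1.unique h2]
  simp

----------------------------------------------------------------

lemma coord_DCl (f : (Fin 4 → ℝ) → Cl) (i : Fin 4) (x : Fin 4 → ℝ)
    (j : Fin (Module.finrank ℂ Cl)) :
    bb.coord j (DCl f i x) = fderiv ℝ (cf f j) x (Pi.single i 1) := by
  rw [DCl, map_sum, Finset.sum_eq_single j]
  · rw [map_smul, Module.Basis.coord_apply, Module.Basis.repr_self, Finsupp.single_eq_same, smul_eq_mul,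
      mul_one]
  · intro b _ hb
    rw [map_smul, Module.Basis.coord_apply, Module.Basis.repr_self, Finsupp.single_eq_of_ne (Ne.symm hb), smul_zero]
  · intro h; exact absurd (Finset.mem_univ j) h

lemma cf_DCl (f : (Fin 4 → ℝ) → Cl) (i : Fin 4) (j : Fin (Module.finrank ℂ Cl)) :
    cf (DCl f i) j = fun y => fderiv ℝ (cf f j) y (Pi.single i 1) :=
  funext fun y => coord_DCl f i y j

lemma fderiv_apply_const {c : (Fin 4 → ℝ) → ℂ} (hc : ContDiff ℝ (⊤ : ℕ∞) c) (x v w : Fin 4 → ℝ) :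
    fderiv ℝ (fun y => fderiv ℝ c y v) x w = fderiv ℝ (fderiv ℝ c) x w v := by
  have hd : ContDiff ℝ (⊤ : ℕ∞) (fderiv ℝ c) := hc.fderiv_right (by simp)
  have h := fderiv_clm_apply (𝕜 := ℝ) (c := fderiv ℝ c) (u := fun _ => v) (x := x)
    (hd.differentiable (by simp)).differentiableAt (differentiableAt_const v)
  rw [h]
  simp

lemma pderiv_symm {f : (Fin 4 → ℝ) → Cl} (hf : SmoothCl f) (i k : Fin 4) :
    DCl (DCl f i) k = DCl (DCl f k) i := by
  funext x
  refine bb.ext_elem fun j => ?_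
  have hc : ContDiff ℝ (⊤ : ℕ∞) (cf f j) := smoothcl_cf hf j
  have h1 : ∀ p q : Fin 4, bb.repr (DCl (DCl f p) q x) j
      = fderiv ℝ (fderiv ℝ (cf f j)) x (Pi.single q 1) (Pi.single p 1) := by
    intro p q
    rw [← Module.Basis.coord_apply, coord_DCl, cf_DCl, fderiv_apply_const hc]
  rw [h1, h1]
  exact (hc.contDiffAt.isSymmSndFDerivAt (by rw [minSmoothness_of_isRCLikeNormedField]; exact WithTop.coe_le_coe.mpr (le_top : (2:ℕ∞) ≤ ⊤))) _ _

/-- The affine function of the statement. -/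
noncomputable def lin (ψ₁ ψ₂ : Cl) : (Fin 4 → ℝ) → Cl :=
  fun x => (∑ i : Fin 4, (x i : ℂ) • e i) * ψ₁ + ψ₂

noncomputable def linCLM (a : Fin 4 → ℂ) : (Fin 4 → ℝ) →L[ℝ] ℂ :=
  ∑ k : Fin 4, a k • (Complex.ofRealCLM.comp (ContinuousLinearMap.proj k))

lemma linCLM_apply (a : Fin 4 → ℂ) (y : Fin 4 → ℝ) :
    linCLM a y = ∑ k : Fin 4, (y k : ℂ) * a k := by
  simp [linCLM, mul_comm]

lemma lam_lin (lam : Cl →ₗ[ℂ] ℂ) (ψ₁ ψ₂ : Cl) (y : Fin 4 → ℝ) :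
    lam (lin ψ₁ ψ₂ y) = linCLM (fun k => lam (e k * ψ₁)) y + lam ψ₂ := by
  rw [lin, map_add, linCLM_apply]
  congr 1
  rw [Finset.sum_mul, map_sum]
  exact Finset.sum_congr rfl fun k _ => by rw [smul_mul_assoc, map_smul, smul_eq_mul]

lemma hasPDeriv_lin (ψ₁ ψ₂ : Cl) (i : Fin 4) :
    HasPDeriv (lin ψ₁ ψ₂) i (fun _ => e i * ψ₁) := by
  intro lam x
  have h1 : (fun y => lam (lin ψ₁ ψ₂ y))
      = fun y => linCLM (fun k => lam (e k * ψ₁)) y + lam ψ₂ :=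
    funext fun y => lam_lin lam ψ₁ ψ₂ y
  rw [h1]
  have h2 := ((linCLM (fun k => lam (e k * ψ₁))).hasFDerivAt (x := x)).add_const (lam ψ₂)
  have h3 := h2.hasLineDerivAt (Pi.single i 1)
  have h4 : linCLM (fun k => lam (e k * ψ₁)) (Pi.single i 1) = lam (e i * ψ₁) := by
    rw [linCLM_apply, Finset.sum_eq_single i]
    · simp
    · intro b _ hb; simp [Pi.single_eq_of_ne hb]
    · intro h; exact absurd (Finset.mem_univ i) h
  rwa [h4] at h3

lemma smoothCl_lin (ψ₁ ψ₂ : Cl) : SmoothCl (lin ψ₁ ψ₂) := by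
  intro lam
  have h1 : (fun y => lam (lin ψ₁ ψ₂ y))
      = fun y => linCLM (fun k => lam (e k * ψ₁)) y + lam ψ₂ :=
    funext fun y => lam_lin lam ψ₁ ψ₂ y
  rw [h1]
  exact ((linCLM _).contDiff).add contDiff_const

lemma smoothCl_add {f g : (Fin 4 → ℝ) → Cl} (hf : SmoothCl f) (hg : SmoothCl g) :
    SmoothCl fun x => f x + g x := by
  intro lam
  have h : (fun y => lam (f y + g y)) = fun y => lam (f y) + lam (g y) := by
    funext y; rw [map_add]
  rw [h]
  exact (hf lam).add (hg lam)

lemma hasPDeriv_neg {f g : (Fin 4 → ℝ) → Cl} {i : Fin 4} (h : HasPDeriv f i g) :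
    HasPDeriv (fun x => -f x) i (fun x => -g x) := by
  have h2 := hasPDeriv_compL (-(LinearMap.id : Cl →ₗ[ℂ] Cl)) h
  simpa using h2

lemma smoothCl_neg {f : (Fin 4 → ℝ) → Cl} (hf : SmoothCl f) : SmoothCl fun x => -f x := by
  have h2 := smoothCl_compL (-(LinearMap.id : Cl →ₗ[ℂ] Cl)) hf
  simpa using h2

/-- Clifford-algebra cancellation. -/
lemma cancel (T : Fin 4 → Cl) (h : ∀ i k, e i * T k = e k * T i)
    {a b c : Fin 4} (hab : a ≠ b) (hac : a ≠ c) (hbc : b ≠ c) : T c = 0 := by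
  have step : ∀ p q : Fin 4, q ≠ p → T p = -(e q * (e p * T q)) := by
    intro p q hqp
    have h1 := congrArg (fun z => e q * z) (h q p)
    rw [← mul_assoc, e_sq, neg_one_mul] at h1
    exact neg_eq_iff_eq_neg.mp h1
  have h1 : T b = -(e a * (e b * T a)) := step b a hab
  have h2 : T a = -(e c * (e a * T c)) := step a c (Ne.symm hac)
  have h3 : T b = -(e c * (e b * T c)) := step b c (Ne.symm hbc)
  have h4 : T b = -(e b * (e c * T c)) := by
    rw [h1, h2]
    have hca : e c * e a = -(e a * e c) := e_anti (Ne.symm hac)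
    have hba : e b * e a = -(e a * e b) := e_anti (Ne.symm hab)
    calc -(e a * (e b * -(e c * (e a * T c))))
        = e a * (e b * ((e c * e a) * T c)) := by noncomm_ring
      _ = e a * (e b * (-(e a * e c) * T c)) := by rw [hca]
      _ = -(e a * ((e b * e a) * (e c * T c))) := by noncomm_ring
      _ = -(e a * (-(e a * e b) * (e c * T c))) := by rw [hba]
      _ = (e a * e a) * (e b * (e c * T c)) := by noncomm_ring
      _ = -(e b * (e c * T c)) := by rw [e_sq]; noncomm_ring
  have hcb : e c * e b = -(e b * e c) := e_anti (Ne.symm hbc)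
  have h5 : e b * (e c * T c) = -(e b * (e c * T c)) := by
    have h6 : e b * (e c * T c) = e c * (e b * T c) := neg_injective (h4.symm.trans h3)
    have h6b : e c * (e b * T c) = -(e b * (e c * T c)) := by
      rw [← mul_assoc, hcb, neg_mul, mul_assoc]
    exact h6.trans h6b
  have h7 : e b * (e c * T c) = 0 := by
    have h8 : (2 : ℂ) • (e b * (e c * T c)) = 0 := by
      rw [two_smul]
      nth_rewrite 1 [h5]
      exact neg_add_cancel _
    simpa using smul_eq_zero.mp h8
  have h9 : e c * T c = 0 := by
    have h10 := congrArg (fun z => e b * z) h7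
    simp only [mul_zero] at h10
    rwa [← mul_assoc, e_sq, neg_one_mul, neg_eq_zero] at h10
  have h11 := congrArg (fun z => e c * z) h9
  simp only [mul_zero] at h11
  rwa [← mul_assoc, e_sq, neg_one_mul, neg_eq_zero] at h11

lemma sum_e_sq (ψ₁ : Cl) : ∑ j : Fin 4, e j * (e j * ψ₁) = (-4 : ℂ) • ψ₁ := by
  have h : ∀ j : Fin 4, e j * (e j * ψ₁) = -ψ₁ := fun j => by
    rw [← mul_assoc, e_sq]; noncomm_ring
  rw [Fin.sum_univ_four, h, h, h, h]
  have h2 : (-4 : ℂ) = (-1) + (-1) + (-1) + (-1) := by norm_num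
  rw [h2, add_smul, add_smul, add_smul, neg_one_smul]

/-- twistor spinors on flat `ℝ⁴` are affine linear.
A smooth `ψ : ℝ⁴ → Cl` (with partial derivatives `∂ᵢψ = Dψ i`) satisfies the twistor
equation `∂ᵢψ(x) = −¼ eᵢ · (∑ⱼ eⱼ ∂ⱼψ(x))` for all `i` and `x` if and only if there are
constants `ψ₁, ψ₂ ∈ Cl` with `ψ(x) = (∑ᵢ xᵢeᵢ)·ψ₁ + ψ₂` for all `x`. -/
theorem twistor_spinor_iff_affine (ψ : (Fin 4 → ℝ) → Cl) (Dψ : Fin 4 → (Fin 4 → ℝ) → Cl)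
    (hsmooth : SmoothCl ψ) (hD : ∀ i, HasPDeriv ψ i (Dψ i)) :
    (∀ (i : Fin 4) (x : Fin 4 → ℝ),
        Dψ i x = -((4 : ℂ)⁻¹) • (e i * ∑ j : Fin 4, e j * Dψ j x)) ↔
      ∃ ψ₁ ψ₂ : Cl, ∀ x : Fin 4 → ℝ,
        ψ x = (∑ i : Fin 4, (x i : ℂ) • e i) * ψ₁ + ψ₂ := by
  constructor
  · intro htw
    have hDψ : ∀ i, Dψ i = DCl ψ i := fun i =>
      hasPDeriv_unique (hD i) (hasPDeriv_DCl hsmooth i)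
    have hsm : ∀ i, SmoothCl (Dψ i) := fun i => (hDψ i) ▸ smoothCl_DCl hsmooth i
    set S : (Fin 4 → ℝ) → Cl := fun x => ∑ j : Fin 4, e j * Dψ j x with hSdef
    have hSx : ∀ x, S x = ∑ j : Fin 4, e j * Dψ j x := fun x => rfl
    have hSsm : SmoothCl S := by
      rw [hSdef]
      apply smoothCl_sum
      intro j
      have h2 := smoothCl_compL (LinearMap.mulLeft ℂ (e j)) (hsm j)
      simpa [LinearMap.mulLeft_apply] using h2
    set T : Fin 4 → (Fin 4 → ℝ) → Cl := fun k => DCl S k with hTdef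
    have hT : ∀ k, HasPDeriv S k (T k) := fun k => hasPDeriv_DCl hSsm k
    have hDlin : ∀ i, Dψ i = fun x =>
        ((-(4 : ℂ)⁻¹) • LinearMap.mulLeft ℂ (e i)) (S x) := by
      intro i
      funext x
      rw [LinearMap.smul_apply, LinearMap.mulLeft_apply, hSx x]
      exact htw i x
    have hGik : ∀ i k, DCl (Dψ i) k = fun x => (-(4 : ℂ)⁻¹) • (e i * T k x) := by
      intro i k
      refine hasPDeriv_unique (hasPDeriv_DCl (hsm i) k) ?_
      have h1 := hasPDeriv_compL ((-(4 : ℂ)⁻¹) • LinearMap.mulLeft ℂ (e i)) (hT k)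
      rw [← hDlin i] at h1
      simpa [LinearMap.mulLeft_apply, LinearMap.smul_apply] using h1
    have hek : ∀ i k x, e i * T k x = e k * T i x := by
      intro i k x
      have hsymm : DCl (Dψ i) k = DCl (Dψ k) i := by
        rw [hDψ i, hDψ k]
        exact pderiv_symm hsmooth i k
      have h1 := congrFun ((hGik i k).symm.trans (hsymm.trans (hGik k i))) x
      exact smul_right_injective Cl (by norm_num : (-(4 : ℂ)⁻¹) ≠ 0) h1
    have hT0 : ∀ k x, T k x = 0 := by
      intro k x
      have hall : ∀ i l : Fin 4, e i * (fun m => T m x) l = e l * (fun m => T m x) i :=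
        fun i l => hek i l x
      fin_cases k
      · exact cancel _ hall (a := 1) (b := 2) (by decide) (by decide) (by decide)
      · exact cancel _ hall (a := 0) (b := 2) (by decide) (by decide) (by decide)
      · exact cancel _ hall (a := 0) (b := 1) (by decide) (by decide) (by decide)
      · exact cancel _ hall (a := 0) (b := 1) (by decide) (by decide) (by decide)
    have hS0 : ∀ x, S x = S 0 := by
      apply const_of_pderiv_zero hSsm
      intro k
      have h1 := hT k
      have hz : T k = fun _ => (0 : Cl) := funext fun x => hT0 k x
      rwa [hz] at h1
    refine ⟨(-(4 : ℂ)⁻¹) • S 0, ψ 0, fun x => ?_⟩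
    have hDconst : ∀ i x, Dψ i x = e i * ((-(4 : ℂ)⁻¹) • S 0) := by
      intro i x
      rw [htw i x, ← hSx x, hS0 x, mul_smul_comm]
    have hφs : SmoothCl (fun y => ψ y + -(lin ((-(4 : ℂ)⁻¹) • S 0) 0 y)) :=
      smoothCl_add hsmooth (smoothCl_neg (smoothCl_lin _ 0))
    have hφd : ∀ i, HasPDeriv (fun y => ψ y + -(lin ((-(4 : ℂ)⁻¹) • S 0) 0 y)) i
        (fun _ => 0) := by
      intro i
      have h1 := hasPDeriv_add (hD i) (hasPDeriv_neg (hasPDeriv_lin ((-(4 : ℂ)⁻¹) • S 0) 0 i))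
      have h2 : (fun x => Dψ i x + -(e i * ((-(4 : ℂ)⁻¹) • S 0))) = fun _ => (0 : Cl) := by
        funext y
        rw [hDconst i y, add_neg_cancel]
      rwa [h2] at h1
    have hconst := const_of_pderiv_zero hφs hφd x
    have hlin0 : lin ((-(4 : ℂ)⁻¹) • S 0) 0 (0 : Fin 4 → ℝ) = 0 := by
      simp [lin]
    rw [hlin0, neg_zero, add_zero, ← sub_eq_add_neg, sub_eq_iff_eq_add] at hconst
    rw [hconst, lin, add_zero, add_comm]
  · rintro ⟨ψ₁, ψ₂, hlin⟩
    have hψ : ψ = lin ψ₁ ψ₂ := funext hlin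
    have hDi : ∀ i, Dψ i = fun _ => e i * ψ₁ := by
      intro i
      refine hasPDeriv_unique (hD i) ?_
      rw [hψ]
      exact hasPDeriv_lin ψ₁ ψ₂ i
    intro i x
    have hsum : ∑ j : Fin 4, e j * Dψ j x = (-4 : ℂ) • ψ₁ := by
      rw [Finset.sum_congr rfl fun j _ => by rw [hDi j]]
      exact sum_e_sq ψ₁
    rw [hDi i, hsum, mul_smul_comm, smul_smul]
    norm_num
end

section
/- (Invariance of the form (1).) For every g ∈ SL(2,ℂ) and all p, q ∈ V_m, B_m(T_g p, T_g q) = B_m(p,q). Thus B_m is an SL(2,ℂ)-invariant bilinear form on the m-th symmetric power representation V_m. -/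
open Polynomial

/-- The bilinear form `B_m(p,q) = ∑_{ℓ=0}^m (−1)^ℓ ℓ!(m−ℓ)! a_ℓ(p) a_{m−ℓ}(q)` on
polynomials of degree at most `m`, where `a_ℓ(p)` is the coefficient of `z^{m−ℓ}`. -/
noncomputable def Bform (m : ℕ) (p q : Polynomial ℂ) : ℂ :=
  ∑ ℓ ∈ Finset.range (m + 1),
    (-1 : ℂ) ^ ℓ * (Nat.factorial ℓ : ℂ) * (Nat.factorial (m - ℓ) : ℂ)
      * p.coeff (m - ℓ) * q.coeff ℓ

/-- The action `(T_g p)(z) = (cz+d)^m p((az+b)/(cz+d))` of `g = (a b; c d) ∈ SL(2,ℂ)` on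
polynomials of degree at most `m`, written out as
`T_g p = ∑_{i=0}^m cᵢ(p)·(az+b)ⁱ(cz+d)^{m−i}` where `cᵢ(p)` is the coefficient of `zⁱ`. -/
noncomputable def Tg (m : ℕ) (g : Matrix.SpecialLinearGroup (Fin 2) ℂ)
    (p : Polynomial ℂ) : Polynomial ℂ :=
  ∑ i ∈ Finset.range (m + 1),
    C (p.coeff i) * (C (g.1 0 0) * X + C (g.1 0 1)) ^ i
      * (C (g.1 1 0) * X + C (g.1 1 1)) ^ (m - i)

/-! ### Auxiliary lemmas -/

/-- The action written for generic matrix entries. -/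
noncomputable def Tg' (m : ℕ) (a b c d : ℂ) (p : Polynomial ℂ) : Polynomial ℂ :=
  ∑ i ∈ Finset.range (m + 1),
    C (p.coeff i) * (C a * X + C b) ^ i * (C c * X + C d) ^ (m - i)

lemma Tg_eq (m : ℕ) (g : Matrix.SpecialLinearGroup (Fin 2) ℂ) (p : Polynomial ℂ) :
    Tg m g p = Tg' m (g.1 0 0) (g.1 0 1) (g.1 1 0) (g.1 1 1) p := rfl

lemma coeff_sub_pow (x : ℂ) (m k : ℕ) :
    ((X - C x) ^ m).coeff k = (-x) ^ (m - k) * m.choose k := by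
  rw [sub_eq_add_neg, ← C_neg, coeff_X_add_C_pow]

lemma Bform_add_left (m : ℕ) (p₁ p₂ q : Polynomial ℂ) :
    Bform m (p₁ + p₂) q = Bform m p₁ q + Bform m p₂ q := by
  unfold Bform
  rw [← Finset.sum_add_distrib]
  exact Finset.sum_congr rfl fun ℓ _ => by rw [coeff_add]; ring

lemma Bform_C_mul_left (m : ℕ) (s : ℂ) (p q : Polynomial ℂ) :
    Bform m (C s * p) q = s * Bform m p q := by
  unfold Bform
  rw [Finset.mul_sum]
  exact Finset.sum_congr rfl fun ℓ _ => by rw [coeff_C_mul]; ring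

lemma Tg'_add (m : ℕ) (a b c d : ℂ) (p₁ p₂ : Polynomial ℂ) :
    Tg' m a b c d (p₁ + p₂) = Tg' m a b c d p₁ + Tg' m a b c d p₂ := by
  unfold Tg'
  rw [← Finset.sum_add_distrib]
  exact Finset.sum_congr rfl fun i _ => by rw [coeff_add, C_add]; ring

lemma Tg'_C_mul (m : ℕ) (a b c d s : ℂ) (p : Polynomial ℂ) :
    Tg' m a b c d (C s * p) = C s * Tg' m a b c d p := by
  unfold Tg'
  rw [Finset.mul_sum]
  exact Finset.sum_congr rfl fun i _ => by rw [coeff_C_mul, C_mul]; ring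

lemma Bform_sub_pow_left (m : ℕ) (x : ℂ) (q : Polynomial ℂ) (hq : q.natDegree ≤ m) :
    Bform m ((X - C x) ^ m) q = (m.factorial : ℂ) * q.eval x := by
  rw [eval_eq_sum_range' (lt_of_le_of_lt hq (Nat.lt_succ_self m)), Bform, Finset.mul_sum]
  refine Finset.sum_congr rfl fun ℓ hℓ => ?_
  have hℓm : ℓ ≤ m := Nat.lt_succ_iff.mp (Finset.mem_range.mp hℓ)
  rw [coeff_sub_pow, Nat.sub_sub_self hℓm, Nat.choose_symm hℓm]
  have h2 : ((m.choose ℓ : ℂ)) * ℓ.factorial * (m - ℓ).factorial = m.factorial := by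
    exact_mod_cast congrArg (Nat.cast (R := ℂ)) (Nat.choose_mul_factorial_mul_factorial hℓm)
  have h3 : (-1 : ℂ) ^ ℓ * (-x) ^ ℓ = x ^ ℓ := by
    rw [← mul_pow]; ring_nf
  calc (-1:ℂ)^ℓ * ℓ.factorial * (m-ℓ).factorial * ((-x)^ℓ * m.choose ℓ) * q.coeff ℓ
      = ((m.choose ℓ : ℂ) * ℓ.factorial * (m-ℓ).factorial) * ((-1:ℂ)^ℓ * (-x)^ℓ) * q.coeff ℓ := by
        ring
    _ = (m.factorial : ℂ) * (q.coeff ℓ * x ^ ℓ) := by rw [h2, h3]; ring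

lemma Tg'_sub_pow (m : ℕ) (a b c d x : ℂ) :
    Tg' m a b c d ((X - C x) ^ m) = (C (a - x * c) * X + C (b - x * d)) ^ m := by
  have h : C (a - x*c) * X + C (b - x*d)
      = (C a * X + C b) + C (-x) * (C c * X + C d) := by
    simp only [C_sub, C_neg, C_mul]; ring
  rw [h, add_pow]
  unfold Tg'
  refine Finset.sum_congr rfl fun i _ => ?_
  rw [coeff_sub_pow, mul_pow]
  simp only [C_mul, C_pow, C_neg, map_natCast]
  ring

lemma Tg'_natDegree_le (m : ℕ) (a b c d : ℂ) (q : Polynomial ℂ) :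
    (Tg' m a b c d q).natDegree ≤ m := by
  refine natDegree_sum_le_of_forall_le _ _ fun i hi => ?_
  have hi' : i ≤ m := Nat.lt_succ_iff.mp (Finset.mem_range.mp hi)
  have h1 : ((C a * X + C b) ^ i).natDegree ≤ i := by
    refine natDegree_pow_le.trans ?_
    calc i * (C a * X + C b).natDegree ≤ i * 1 :=
          Nat.mul_le_mul_left i natDegree_linear_le
      _ = i := Nat.mul_one i
  have h2 : ((C c * X + C d) ^ (m - i)).natDegree ≤ m - i := by
    refine natDegree_pow_le.trans ?_
    calc (m - i) * (C c * X + C d).natDegree ≤ (m - i) * 1 :=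
          Nat.mul_le_mul_left (m - i) natDegree_linear_le
      _ = m - i := Nat.mul_one (m - i)
  calc (C (q.coeff i) * (C a * X + C b) ^ i * (C c * X + C d) ^ (m - i)).natDegree
      ≤ (C (q.coeff i) * (C a * X + C b) ^ i).natDegree
          + ((C c * X + C d) ^ (m - i)).natDegree := natDegree_mul_le
    _ ≤ ((C (q.coeff i)).natDegree + ((C a * X + C b) ^ i).natDegree) + (m - i) :=
        add_le_add natDegree_mul_le h2
    _ ≤ (0 + i) + (m - i) := add_le_add (add_le_add (le_of_eq (natDegree_C _)) h1) le_rfl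
    _ = m := by omega

lemma Tg'_eval (m : ℕ) (a b c d : ℂ) (q : Polynomial ℂ) (y : ℂ) :
    (Tg' m a b c d q).eval y
      = ∑ i ∈ Finset.range (m + 1), q.coeff i * (a * y + b) ^ i * (c * y + d) ^ (m - i) := by
  unfold Tg'
  rw [eval_finset_sum]
  exact Finset.sum_congr rfl fun i _ => by simp

/-- The key pointwise computation. -/
lemma key_calc (m : ℕ) (a b c d : ℂ) (hdet : a * d - b * c = 1) (q : Polynomial ℂ)
    (hq : q.natDegree ≤ m) (x : ℂ) (hx : a - x * c ≠ 0) :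
    Bform m (Tg' m a b c d ((X - C x) ^ m)) (Tg' m a b c d q)
      = (m.factorial : ℂ) * q.eval x := by
  set e : ℂ := a - x * c with he
  set y : ℂ := (x * d - b) / e with hy
  have hay : a * y + b = x / e := by
    have hx' : a - x * c ≠ 0 := hx
    rw [hy, he]; field_simp [hx']; linear_combination x * hdet
  have hcy : c * y + d = 1 / e := by
    have hx' : a - x * c ≠ 0 := hx
    rw [hy, he, eq_div_iff hx', add_mul, mul_div_assoc', div_mul_cancel₀ _ hx']
    linear_combination hdet
  have hfact : Tg' m a b c d ((X - C x) ^ m) = C (e ^ m) * (X - C y) ^ m := by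
    rw [Tg'_sub_pow]
    have h : C (a - x * c) * X + C (b - x * d) = C e * (X - C y) := by
      rw [mul_sub, ← C_mul, he]
      congr 2
      rw [hy, ← C_neg, ← he]; congr 1; field_simp; ring
    rw [h, mul_pow, C_pow]
  rw [hfact, Bform_C_mul_left, Bform_sub_pow_left m y _ (Tg'_natDegree_le m a b c d q),
    Tg'_eval, eval_eq_sum_range' (lt_of_le_of_lt hq (Nat.lt_succ_self m)),
    Finset.mul_sum, Finset.mul_sum, Finset.mul_sum]
  refine Finset.sum_congr rfl fun i hi => ?_
  have hi' : i ≤ m := Nat.lt_succ_iff.mp (Finset.mem_range.mp hi)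
  rw [hay, hcy]
  have hem : (a - x * c) ^ i * (a - x * c) ^ (m - i) = (a - x * c) ^ m := by
    rw [← pow_add]; congr 1; omega
  rw [div_pow, div_pow, one_pow]
  field_simp
  linear_combination (-(m.factorial : ℂ) * q.coeff i * x ^ i) * hem

/-- The difference of the two sides, as a linear map in `p`. -/
noncomputable def Phi (m : ℕ) (a b c d : ℂ) (q : Polynomial ℂ) :
    Polynomial ℂ →ₗ[ℂ] ℂ where
  toFun p := Bform m (Tg' m a b c d p) (Tg' m a b c d q) - Bform m p q
  map_add' p₁ p₂ := by
    simp only [Tg'_add, Bform_add_left]; ring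
  map_smul' s p := by
    simp only [smul_eq_mul, RingHom.id_apply, smul_eq_C_mul, Tg'_C_mul, Bform_C_mul_left]
    ring

lemma sub_pow_expand (m : ℕ) (x : ℂ) :
    (X - C x) ^ m = ∑ i ∈ Finset.range (m + 1), C ((-x) ^ (m - i) * (m.choose i : ℂ)) * X ^ i := by
  rw [sub_eq_add_neg, ← C_neg, add_pow]
  exact Finset.sum_congr rfl fun i _ => by
    simp only [C_mul, C_pow, map_natCast]; ring

/-- invariance of the form (1).  For every `g ∈ SL(2,ℂ)` and all
`p, q ∈ V_m`, `B_m(T_g p, T_g q) = B_m(p,q)`; thus `B_m` is an `SL(2,ℂ)`-invariant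
bilinear form on the `m`-th symmetric power representation `V_m`. -/
theorem Bform_invariant (m : ℕ) (hm : 1 ≤ m)
    (g : Matrix.SpecialLinearGroup (Fin 2) ℂ) (p q : Polynomial ℂ)
    (hp : p ∈ Polynomial.degreeLE ℂ (m : ℕ))
    (hq : q ∈ Polynomial.degreeLE ℂ (m : ℕ)) :
    Bform m (Tg m g p) (Tg m g q) = Bform m p q := by
  set a := g.1 0 0; set b := g.1 0 1; set c := g.1 1 0; set d := g.1 1 1
  have hdet : a * d - b * c = 1 := by
    have := g.2
    rw [Matrix.det_fin_two] at this
    exact this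
  have hqd : q.natDegree ≤ m := by
    rw [mem_degreeLE] at hq
    exact natDegree_le_iff_degree_le.mpr hq
  have hpd : p.natDegree ≤ m := by
    rw [mem_degreeLE] at hp
    exact natDegree_le_iff_degree_le.mpr hp
  set Φ := Phi m a b c d q with hΦ
  -- Φ vanishes on (X - C x)^m for generic x
  have hroot : ∀ x : ℂ, a - x * c ≠ 0 → Φ ((X - C x) ^ m) = 0 := by
    intro x hx
    show Bform m (Tg' m a b c d _) (Tg' m a b c d q) - Bform m _ q = 0
    rw [key_calc m a b c d hdet q hqd x hx, Bform_sub_pow_left m x q hqd, sub_self]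
  -- the auxiliary polynomial
  set Q : Polynomial ℂ := ∑ i ∈ Finset.range (m + 1),
      C ((-1 : ℂ) ^ (m - i) * (m.choose i : ℂ) * Φ (X ^ i)) * X ^ (m - i) with hQ
  have hQeval : ∀ x : ℂ, Q.eval x = Φ ((X - C x) ^ m) := by
    intro x
    rw [sub_pow_expand, map_sum, hQ, eval_finset_sum]
    refine Finset.sum_congr rfl fun i _ => ?_
    have : Φ (C ((-x) ^ (m - i) * (m.choose i : ℂ)) * X ^ i)
        = ((-x) ^ (m - i) * (m.choose i : ℂ)) * Φ (X ^ i) := by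
      rw [← smul_eq_C_mul, map_smul, smul_eq_mul]
    rw [this]
    simp only [eval_mul, eval_C, eval_pow, eval_X]
    rw [neg_pow x (m - i)]
    ring
  have hQ0 : Q = 0 := by
    apply Polynomial.eq_zero_of_infinite_isRoot
    have hfin : ({x : ℂ | a - x * c = 0}).Finite := by
      by_cases hc : c = 0
      · have ha : a ≠ 0 := by
          intro h; rw [hc, h] at hdet; simp at hdet
        convert Set.finite_empty
        ext x; simp [hc, ha]
      · apply Set.Finite.subset (Set.finite_singleton (a / c))
        intro x hx
        simp only [Set.mem_setOf_eq] at hx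
        simp only [Set.mem_singleton_iff]
        field_simp
        linear_combination -hx
    have hsub : {x : ℂ | a - x * c = 0}ᶜ ⊆ {x : ℂ | Q.IsRoot x} := by
      intro x hx
      simp only [Set.mem_compl_iff, Set.mem_setOf_eq] at hx ⊢
      rw [IsRoot, hQeval, hroot x hx]
    exact Set.Infinite.mono hsub hfin.infinite_compl
  -- extract that Φ (X^i) = 0 for i ≤ m
  have hmono : ∀ i ∈ Finset.range (m + 1), Φ (X ^ i) = 0 := by
    intro j hj
    have hj' : j ≤ m := Nat.lt_succ_iff.mp (Finset.mem_range.mp hj)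
    have hc : Q.coeff (m - j) = 0 := by rw [hQ0]; simp
    rw [hQ, finset_sum_coeff] at hc
    rw [Finset.sum_eq_single j] at hc
    · rw [coeff_C_mul, coeff_X_pow, if_pos rfl, mul_one] at hc
      have h1 : ((-1 : ℂ) ^ (m - j)) ≠ 0 := by
        apply pow_ne_zero; norm_num
      have h2 : ((m.choose j : ℂ)) ≠ 0 := by
        exact_mod_cast (Nat.choose_pos hj').ne'
      simp only [mul_eq_zero] at hc
      rcases hc with (h | h) | h
      · exact absurd h h1
      · exact absurd h h2
      · exact h
    · intro i hi hij
      have hi' : i ≤ m := Nat.lt_succ_iff.mp (Finset.mem_range.mp hi)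
      rw [coeff_C_mul, coeff_X_pow, if_neg (by omega), mul_zero]
    · intro h; exact absurd hj h
  -- conclude by linearity
  have hΦp : Φ p = 0 := by
    have hrep := p.as_sum_range' (m + 1) (lt_of_le_of_lt hpd (Nat.lt_succ_self m))
    rw [hrep, map_sum]
    refine Finset.sum_eq_zero fun i hi => ?_
    rw [← C_mul_X_pow_eq_monomial, ← smul_eq_C_mul, map_smul, smul_eq_mul,
      hmono i hi, mul_zero]
  have : Bform m (Tg' m a b c d p) (Tg' m a b c d q) - Bform m p q = 0 := hΦp
  rw [Tg_eq, Tg_eq]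
  exact sub_eq_zero.mp this
end
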